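/- arXiv:1302.5744 — 2 statements merged into one kernel-verified Lean document; each statement's English description precedes it below -/
import Mathlib

section
/- As formal power series, -q·(d/dq) log(∏_{n≥1}(1-q^n)^{Q(n)/n}) = ∑_{n≥1} Q̂(n) q^n, where Q(n) is the number of partitions of n into distinct parts and Q̂(n) is the number of partitions of n whose parts occur with equal multiplicity. -/
open PowerSeries

/-- `Q n`: the number of partitions of `n` into distinct parts. -/
def Q (n : ℕ) : ℕ := (Nat.Partition.distincts n).card

/-- `Qhat n`: the number of partitions of `n` in which every part occurs with
the same multiplicity. -/
def Qhat (n : ℕ) : ℕ :=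
  (Finset.univ.filter fun p : Nat.Partition n =>
    ∀ i ∈ p.parts, ∀ j ∈ p.parts, p.parts.count i = p.parts.count j).card

/-- The formal power series `log (1 - q^n) = -∑_{m ≥ 1} q^{n m} / m` over `ℚ`. -/
noncomputable def logOneSubPow (n : ℕ) : PowerSeries ℚ :=
  PowerSeries.mk fun k => if n ∣ k ∧ k ≠ 0 then -(1 : ℚ) / ((k / n : ℕ) : ℚ) else 0

/-- The formal logarithm `log ∏_{n ≥ 1} (1-q^n)^{c n} = ∑_{n ≥ 1} c n · log(1 - q^n)`,
defined coefficientwise. -/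
noncomputable def logProd (c : ℕ → ℚ) : PowerSeries ℚ :=
  PowerSeries.mk fun k => ∑ n ∈ Finset.Icc 1 k, c n * coeff k (logOneSubPow n)

/-- The operator `q · d/dq`, multiplying the `n`-th coefficient by `n`. -/
noncomputable def qDeriv (F : PowerSeries ℚ) : PowerSeries ℚ :=
  PowerSeries.mk fun n => (n : ℚ) * coeff n F

/-!
Coefficientwise, `-q d/dq log ∏ (1 - q^n)^{a(n)/n}` has `k`-th coefficient `∑_{d ∣ k} a(d)`.
For `a = Q` this divisor sum counts the partitions of `k` with all multiplicities equal: such a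
partition with common multiplicity `m` is `m` copies of the partition of `d = k / m` formed by its
distinct parts, and conversely.
-/

theorem coeff_logOneSubPow (n k : ℕ) :
    coeff k (logOneSubPow n) = if n ∣ k ∧ k ≠ 0 then -(n : ℚ) / k else 0 := by
  rw [logOneSubPow, coeff_mk]
  split_ifs with h
  · obtain ⟨⟨m, rfl⟩, hk⟩ := h
    have hn : n ≠ 0 := left_ne_zero_of_mul hk
    rw [Nat.mul_div_cancel_left m (Nat.pos_of_ne_zero hn)]
    push_cast
    field_simp
  · rfl

theorem coeff_qDeriv_logProd (c : ℕ → ℚ) (k : ℕ) :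
    coeff k (qDeriv (logProd c)) = -∑ d ∈ k.divisors, (d : ℚ) * c d := by
  rcases eq_or_ne k 0 with rfl | hk
  · simp [qDeriv]
  have hsub : k.divisors ⊆ Finset.Icc 1 k := fun d hd =>
    Finset.mem_Icc.2 ⟨Nat.pos_of_mem_divisors hd, Nat.divisor_le hd⟩
  have hvanish : ∀ d ∈ Finset.Icc 1 k, d ∉ k.divisors →
      c d * coeff k (logOneSubPow d) = 0 := fun d _ hd => by
    rw [coeff_logOneSubPow, if_neg fun h => hd (Nat.mem_divisors.2 h), mul_zero]
  rw [qDeriv, logProd, coeff_mk, coeff_mk, ← Finset.sum_subset hsub hvanish, Finset.mul_sum,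
    ← Finset.sum_neg_distrib]
  refine Finset.sum_congr rfl fun d hd => ?_
  rw [coeff_logOneSubPow, if_pos (Nat.mem_divisors.1 hd)]
  field_simp

theorem neg_qDeriv_logProd_div (a : ℕ → ℚ) :
    -qDeriv (logProd fun n => a n / n) = PowerSeries.mk fun k => ∑ d ∈ k.divisors, a d := by
  ext k
  rw [map_neg, coeff_qDeriv_logProd, neg_neg, coeff_mk]
  refine Finset.sum_congr rfl fun d hd => ?_
  have hd : (d : ℚ) ≠ 0 := by exact_mod_cast (Nat.pos_of_mem_divisors hd).ne'
  field_simp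

namespace Multiset

theorem eq_count_nsmul_dedup {α : Type*} [DecidableEq α] {s : Multiset α}
    (h : ∀ i ∈ s, ∀ j ∈ s, s.count i = s.count j) {a : α} (ha : a ∈ s) :
    s = s.count a • s.dedup := by
  ext b
  rw [count_nsmul, count_dedup]
  split_ifs with hb
  · rw [mul_one, h b hb a ha]
  · rw [mul_zero, count_eq_zero_of_notMem hb]

end Multiset

namespace Nat.Partition

def distinctParts {n : ℕ} (p : n.Partition) : p.parts.dedup.sum.Partition where
  parts := p.parts.dedup
  parts_pos hi := p.parts_pos (Multiset.mem_dedup.1 hi)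
  parts_sum := rfl

def nsmulOfDvd {d k : ℕ} (p : d.Partition) (h : d ∣ k) : k.Partition where
  parts := (k / d) • p.parts
  parts_pos hi := p.parts_pos (Multiset.mem_of_mem_nsmul hi)
  parts_sum := by rw [Multiset.sum_nsmul, p.parts_sum, smul_eq_mul, Nat.div_mul_cancel h]

theorem sigma_mk_eq_of_parts_eq {d₁ d₂ : ℕ} {p₁ : d₁.Partition} {p₂ : d₂.Partition}
    (h : p₁.parts = p₂.parts) : (⟨d₁, p₁⟩ : Σ d, d.Partition) = ⟨d₂, p₂⟩ := by
  obtain rfl : d₁ = d₂ := by rw [← p₁.parts_sum, ← p₂.parts_sum, h]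
  rw [Nat.Partition.ext h]

theorem dvd_and_parts_eq_nsmul_dedup {k : ℕ} (hk : k ≠ 0) {p : k.Partition}
    (hp : ∀ i ∈ p.parts, ∀ j ∈ p.parts, p.parts.count i = p.parts.count j) :
    p.parts.dedup.sum ∣ k ∧ p.parts = (k / p.parts.dedup.sum) • p.parts.dedup := by
  obtain ⟨a, ha⟩ : ∃ a, a ∈ p.parts := Multiset.exists_mem_of_ne_zero fun h0 =>
    hk (by rw [← p.parts_sum, h0, Multiset.sum_zero])
  have hrep := Multiset.eq_count_nsmul_dedup hp ha
  have hsum : k = p.parts.count a * p.parts.dedup.sum := by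
    rw [← smul_eq_mul, ← Multiset.sum_nsmul, ← hrep, p.parts_sum]
  have hd : 0 < p.parts.dedup.sum := Nat.pos_of_ne_zero fun h0 => hk (by rw [hsum, h0, mul_zero])
  refine ⟨Dvd.intro_left _ hsum.symm, ?_⟩
  rwa [Nat.div_eq_of_eq_mul_left hd hsum]

end Nat.Partition

theorem Qhat_eq_sum_divisors_Q {k : ℕ} (hk : k ≠ 0) : Qhat k = ∑ d ∈ k.divisors, Q d := by
  classical
  simp only [Qhat, Q]
  rw [← Finset.card_sigma]
  refine Finset.card_bij' (fun p _ => ⟨_, p.distinctParts⟩)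
    (fun x hx => x.2.nsmulOfDvd (Nat.dvd_of_mem_divisors (Finset.mem_sigma.1 hx).1)) ?_ ?_ ?_ ?_
  · intro p hp
    obtain ⟨hdvd, -⟩ := Nat.Partition.dvd_and_parts_eq_nsmul_dedup hk (Finset.mem_filter.1 hp).2
    simp [Nat.Partition.distincts, Nat.Partition.distinctParts, Multiset.nodup_dedup, hdvd, hk]
  · rintro ⟨d, q⟩ hq
    have hnodup : q.parts.Nodup := by simpa [Nat.Partition.distincts] using (Finset.mem_sigma.1 hq).2
    refine Finset.mem_filter.2 ⟨Finset.mem_univ _, fun i hi j hj => ?_⟩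
    simp only [Nat.Partition.nsmulOfDvd, Multiset.count_nsmul,
      Multiset.count_eq_one_of_mem hnodup (Multiset.mem_of_mem_nsmul hi),
      Multiset.count_eq_one_of_mem hnodup (Multiset.mem_of_mem_nsmul hj)]
  · intro p hp
    exact Nat.Partition.ext
      (Nat.Partition.dvd_and_parts_eq_nsmul_dedup hk (Finset.mem_filter.1 hp).2).2.symm
  · rintro ⟨d, q⟩ hq
    obtain ⟨hdvd, hq⟩ := Finset.mem_sigma.1 hq
    have hnodup : q.parts.Nodup := by simpa [Nat.Partition.distincts] using hq
    have hm : k / d ≠ 0 := Nat.div_ne_zero_iff_of_dvd (Nat.dvd_of_mem_divisors hdvd) |>.2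
      ⟨hk, (Nat.pos_of_mem_divisors hdvd).ne'⟩
    apply Nat.Partition.sigma_mk_eq_of_parts_eq
    simp only [Nat.Partition.distinctParts, Nat.Partition.nsmulOfDvd]
    rw [Multiset.dedup_nsmul hm, Multiset.dedup_eq_self.2 hnodup]

/-- `-q (d/dq) log ∏_{n≥1} (1-q^n)^{Q(n)/n} = ∑_{n≥1} Q̂(n) q^n`. -/
theorem neg_qDeriv_logProd_Q :
    -qDeriv (logProd fun n => (Q n : ℚ) / (n : ℚ)) =
      PowerSeries.mk fun n => if n = 0 then 0 else (Qhat n : ℚ) := by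
  rw [neg_qDeriv_logProd_div]
  ext k
  rw [coeff_mk, coeff_mk]
  rcases eq_or_ne k 0 with rfl | hk
  · simp
  rw [if_neg hk, Qhat_eq_sum_divisors_Q hk, Nat.cast_sum]
end

section
/- As formal power series over ℚ, ∑_{n≥1} (∑_{d|n} μ(d) Q̂(n/d)) q^n = ∑_{n≥1} Q(n) q^n, where Q(n) counts partitions into distinct parts and Q̂(n) counts partitions with all parts of equal multiplicity. -/
/-!
A partition of `n ≥ 1` in which every part occurs with the same multiplicity `m` is `m` copies of
its set of distinct parts, a partition of `d = n / m` into distinct parts; conversely `n / d`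
copies of any partition of a divisor `d` of `n` into distinct parts is such a partition. Hence
`Q̂(n) = ∑_{d ∣ n} Q(d)`, and Möbius inversion compares the coefficients.
-/

open PowerSeries

namespace Multiset

section DecidableEq

variable {α : Type*} [DecidableEq α] {s : Multiset α}

theorem exists_eq_nsmul_dedup (h : ∀ i ∈ s, ∀ j ∈ s, s.count i = s.count j) :
    ∃ m : ℕ, s = m • s.dedup := by
  rcases s.empty_or_exists_mem with rfl | ⟨a, ha⟩
  · exact ⟨0, by simp⟩
  refine ⟨s.count a, ext.2 fun i => ?_⟩
  rw [count_nsmul, count_dedup]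
  split_ifs with hi
  · rw [mul_one, h i hi a ha]
  · rw [mul_zero, count_eq_zero_of_notMem hi]

theorem Nodup.count_nsmul_of_mem (hs : s.Nodup) {m : ℕ} {a : α} (ha : a ∈ m • s) :
    (m • s).count a = m := by
  rw [count_nsmul, count_eq_one_of_mem hs (mem_of_mem_nsmul ha), mul_one]

end DecidableEq

variable {s : Multiset ℕ}

theorem exists_eq_nsmul_dedup_and_sum_eq (h : ∀ i ∈ s, ∀ j ∈ s, s.count i = s.count j) :
    ∃ m : ℕ, s = m • s.dedup ∧ s.sum = m * s.dedup.sum := by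
  obtain ⟨m, hm⟩ := exists_eq_nsmul_dedup h
  refine ⟨m, hm, ?_⟩
  rw [← smul_eq_mul, ← sum_nsmul, ← hm]

theorem dedup_sum_dvd_sum (h : ∀ i ∈ s, ∀ j ∈ s, s.count i = s.count j) :
    s.dedup.sum ∣ s.sum := by
  obtain ⟨m, -, hm⟩ := exists_eq_nsmul_dedup_and_sum_eq h
  exact Dvd.intro_left m hm.symm

theorem eq_sum_div_nsmul_dedup (h : ∀ i ∈ s, ∀ j ∈ s, s.count i = s.count j)
    (hs : s.sum ≠ 0) : s = (s.sum / s.dedup.sum) • s.dedup := by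
  obtain ⟨m, hm, hsum⟩ := exists_eq_nsmul_dedup_and_sum_eq h
  rwa [hsum, Nat.mul_div_cancel _ (Nat.pos_of_ne_zero (right_ne_zero_of_mul (hsum ▸ hs)))]

end Multiset

namespace Nat.Partition

open Finset

def equalMultiplicities (n : ℕ) : Finset n.Partition :=
  {p | ∀ i ∈ p.parts, ∀ j ∈ p.parts, p.parts.count i = p.parts.count j}

variable {n : ℕ}

theorem dedup_sum_mem_divisors {p : n.Partition} (hp : p ∈ equalMultiplicities n) (hn : n ≠ 0) :
    p.parts.dedup.sum ∈ n.divisors := by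
  have hdvd := Multiset.dedup_sum_dvd_sum (mem_filter.1 hp).2
  rw [p.parts_sum] at hdvd
  exact Nat.mem_divisors.2 ⟨hdvd, hn⟩

theorem card_filter_dedup_sum_eq {d : ℕ} (hd : d ∈ n.divisors) :
    #{p ∈ equalMultiplicities n | p.parts.dedup.sum = d} = #(distincts d) := by
  have hdn : n / d * d = n := Nat.div_mul_cancel (Nat.dvd_of_mem_divisors hd)
  have hn : n ≠ 0 := Nat.ne_zero_of_mem_divisors hd
  have hnd : n / d ≠ 0 := fun h0 => hn (by rw [← hdn, h0, zero_mul])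
  refine card_bij'
    (fun p hp => ⟨p.parts.dedup, fun hi => p.parts_pos (Multiset.mem_dedup.1 hi),
      (mem_filter.1 hp).2⟩)
    (fun q _ => ⟨(n / d) • q.parts, fun hi => q.parts_pos (Multiset.mem_of_mem_nsmul hi),
      by rw [Multiset.sum_nsmul, q.parts_sum, smul_eq_mul, hdn]⟩) ?_ ?_ ?_ ?_
  · intro p _
    exact mem_filter.2 ⟨mem_univ _, p.parts.nodup_dedup⟩
  · intro q hq
    have hq' : q.parts.Nodup := (mem_filter.1 hq).2
    refine mem_filter.2 ⟨mem_filter.2 ⟨mem_univ _, fun i hi j hj => ?_⟩, ?_⟩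
    · rw [hq'.count_nsmul_of_mem hi, hq'.count_nsmul_of_mem hj]
    · rw [Multiset.dedup_nsmul hnd, hq'.dedup, q.parts_sum]
  · intro p hp
    obtain ⟨hpS, rfl⟩ := mem_filter.1 hp
    ext1
    have hparts := Multiset.eq_sum_div_nsmul_dedup (mem_filter.1 hpS).2 (by rwa [p.parts_sum])
    rw [p.parts_sum] at hparts
    exact hparts.symm
  · intro q hq
    ext1
    exact (Multiset.dedup_nsmul hnd).trans (mem_filter.1 hq).2.dedup

theorem card_equalMultiplicities (hn : n ≠ 0) :
    #(equalMultiplicities n) = ∑ d ∈ n.divisors, #(distincts d) := by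
  rw [card_eq_sum_card_fiberwise fun p hp => dedup_sum_mem_divisors hp hn]
  exact sum_congr rfl fun d hd => card_filter_dedup_sum_eq hd

end Nat.Partition

open ArithmeticFunction ArithmeticFunction.Moebius in
/-- `∑_{n ≥ 1} (∑_{d ∣ n} μ(d) Q̂(n/d)) qⁿ = ∑_{n ≥ 1} Q(n) qⁿ` over `ℚ`. -/
theorem moebius_sum_Qhat_genfun :
    (PowerSeries.mk fun n => ∑ d ∈ n.divisors, (μ d : ℚ) * (Qhat (n / d) : ℚ)) =
      PowerSeries.mk fun n => if n = 0 then 0 else (Q n : ℚ) := by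
  have inversion := (sum_eq_iff_sum_mul_moebius_eq (f := fun n => (Q n : ℚ))
    (g := fun n => (Qhat n : ℚ))).1 fun n hn => by
      rw [Qhat, ← Nat.Partition.equalMultiplicities,
        Nat.Partition.card_equalMultiplicities hn.ne', Nat.cast_sum]
      rfl
  ext n
  rw [coeff_mk, coeff_mk]
  rcases n.eq_zero_or_pos with rfl | hn
  · simp
  · rw [if_neg hn.ne', ← inversion n hn,
      Nat.sum_divisorsAntidiagonal fun d e => (μ d : ℚ) * Qhat e]
end
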